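/- arXiv:math-ph/0602038 — 4 statements merged into one kernel-verified Lean document; each statement's English description precedes it below -/
import Mathlib

section
/- Let X = (X_1, …, X_k) be a SOPDE on ℝ^k × ℝ^n × ℝ^{nk} with coefficient functions (X_A)^i_B, and suppose X is integrable, i.e. through every point of ℝ^k × ℝ^n × ℝ^{nk} there passes an integral section of X. Then the coefficients are symmetric: (X_A)^i_B = (X_B)^i_A at every point, for all i, A, B. -/
noncomputable section

/-- The phase space `ℝ^k × ℝ^n × ℝ^{nk}` with coordinates `(t^A, q^i, v^i_A)`. -/
abbrev Phase (k n : ℕ) : Type :=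
  (Fin k → ℝ) × (Fin n → ℝ) × (Fin n → Fin k → ℝ)

/-- Partial derivative `∂f/∂t^A` of a function on `ℝ^k`. -/
def pdR {k : ℕ} (A : Fin k) (f : (Fin k → ℝ) → ℝ) (t : Fin k → ℝ) : ℝ :=
  fderiv ℝ f t (Pi.single A 1)

/-- `ψ` is an integral section of the `k`-vector field `X = (X_1, …, X_k)`:
`∂ψ/∂t^A(t) = X_A(ψ(t))`. -/
def IsIntegralSection {k n : ℕ} (X : Fin k → Phase k n → Phase k n)
    (ψ : (Fin k → ℝ) → Phase k n) : Prop :=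
  ∀ t A, fderiv ℝ ψ t (Pi.single A 1) = X A (ψ t)

/-- `X` is a second order partial differential equation (SOPDE):
`(X_A)^B = δ^B_A` and `(X_A)^i = v^i_A`. -/
def IsSOPDE {k n : ℕ} (X : Fin k → Phase k n → Phase k n) : Prop :=
  ∀ A p, (X A p).1 = Pi.single A 1 ∧ ∀ i, (X A p).2.1 i = p.2.2 i A

/-- The first prolongation `φ^[1](t) = (t, φ^i(t), ∂φ^i/∂t^A(t))` of `φ : ℝ^k → ℝ^n`. -/
def prolong {k n : ℕ} (φ : (Fin k → ℝ) → Fin n → ℝ) (t : Fin k → ℝ) : Phase k n :=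
  (t, φ t, fun i A => pdR A (fun s => φ s i) t)

/-! Along an integral section `ψ` of a SOPDE the velocity coordinates `v^i_B ∘ ψ` are the partial
derivatives `∂_B (q^i ∘ ψ)`, and the partial derivatives `∂_A (v^i_B ∘ ψ)` are the coefficients
`(X_A)^i_B ∘ ψ`. Hence `(X_A)^i_B ∘ ψ = ∂_A ∂_B (q^i ∘ ψ)`, which is symmetric in `A, B` by
Schwarz's theorem; integrability puts every point on such a `ψ`. -/

theorem pdR_pdR_comm {k : ℕ} {f : (Fin k → ℝ) → ℝ} (hf : ContDiff ℝ 2 f) (A B : Fin k)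
    (t : Fin k → ℝ) : pdR A (pdR B f) t = pdR B (pdR A f) t := by
  have hf' : Differentiable ℝ (fderiv ℝ f) := (hf.fderiv_right le_rfl).differentiable one_ne_zero
  have hsnd (C D : Fin k) :
      pdR C (pdR D f) t = fderiv ℝ (fderiv ℝ f) t (Pi.single C 1) (Pi.single D 1) := by
    rw [pdR, show pdR D f = fun s => fderiv ℝ f s (Pi.single D 1) from rfl,
      fderiv_clm_apply (hf' t) (differentiableAt_const _)]
    simp
  rw [hsnd, hsnd, hf.contDiffAt.isSymmSndFDerivAt (by simp)]

theorem pdR_clm_comp {k : ℕ} {E : Type*} [NormedAddCommGroup E] [NormedSpace ℝ E]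
    (L : E →L[ℝ] ℝ) {ψ : (Fin k → ℝ) → E} {t : Fin k → ℝ} (hψ : DifferentiableAt ℝ ψ t)
    (A : Fin k) : pdR A (fun s => L (ψ s)) t = L (fderiv ℝ ψ t (Pi.single A 1)) := by
  rw [pdR, show (fun s => L (ψ s)) = L ∘ ψ from rfl, fderiv_comp t L.differentiableAt hψ]
  simp

namespace IsIntegralSection

variable {k n : ℕ} {X : Fin k → Phase k n → Phase k n} {ψ : (Fin k → ℝ) → Phase k n}

theorem pdR_velocity (hψ : IsIntegralSection X ψ) {t : Fin k → ℝ}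
    (hψt : DifferentiableAt ℝ ψ t) (i : Fin n) (A B : Fin k) :
    pdR A (fun s => (ψ s).2.2 i B) t = (X A (ψ t)).2.2 i B := by
  let v : Phase k n →L[ℝ] ℝ :=
    (ContinuousLinearMap.proj (R := ℝ) (φ := fun _ : Fin k => ℝ) B).comp <|
      (ContinuousLinearMap.proj i).comp <|
        (ContinuousLinearMap.snd ℝ _ _).comp (ContinuousLinearMap.snd ℝ _ _)
  rw [show (fun s => (ψ s).2.2 i B) = fun s => v (ψ s) from rfl, pdR_clm_comp v hψt, hψ]
  rfl

theorem pdR_position (hψ : IsIntegralSection X ψ) (hX : IsSOPDE X) {t : Fin k → ℝ}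
    (hψt : DifferentiableAt ℝ ψ t) (i : Fin n) (A : Fin k) :
    pdR A (fun s => (ψ s).2.1 i) t = (ψ t).2.2 i A := by
  let q : Phase k n →L[ℝ] ℝ :=
    (ContinuousLinearMap.proj (R := ℝ) (φ := fun _ : Fin n => ℝ) i).comp <|
      (ContinuousLinearMap.fst ℝ _ _).comp (ContinuousLinearMap.snd ℝ _ _)
  rw [show (fun s => (ψ s).2.1 i) = fun s => q (ψ s) from rfl, pdR_clm_comp q hψt, hψ]
  exact (hX A (ψ t)).2 i

theorem pdR_pdR_position (hψ : IsIntegralSection X ψ) (hX : IsSOPDE X)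
    (hψd : Differentiable ℝ ψ) (t : Fin k → ℝ) (i : Fin n) (A B : Fin k) :
    pdR A (pdR B fun s => (ψ s).2.1 i) t = (X A (ψ t)).2.2 i B := by
  have hq : pdR B (fun s => (ψ s).2.1 i) = fun s => (ψ s).2.2 i B :=
    funext fun s => hψ.pdR_position hX (hψd s) i B
  rw [hq, hψ.pdR_velocity (hψd t)]

end IsIntegralSection

theorem stmt3_general {k n : ℕ} (X : Fin k → Phase k n → Phase k n)
    (hS : IsSOPDE X)
    (h : ∀ m : Phase k n, ∃ (ψ : (Fin k → ℝ) → Phase k n) (t₀ : Fin k → ℝ),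
        ContDiff ℝ (⊤ : ℕ∞) ψ ∧ IsIntegralSection X ψ ∧ ψ t₀ = m) :
    ∀ (p : Phase k n) (i : Fin n) (A B : Fin k), (X A p).2.2 i B = (X B p).2.2 i A := by
  intro p i A B
  obtain ⟨ψ, t₀, hψ, hint, rfl⟩ := h p
  have hψ2 : ContDiff ℝ 2 ψ := hψ.of_le (WithTop.coe_le_coe.2 le_top)
  have hψd : Differentiable ℝ ψ := hψ2.differentiable two_ne_zero
  have hq : ContDiff ℝ 2 fun s => (ψ s).2.1 i :=
    (contDiff_apply ℝ ℝ i).comp (contDiff_fst.comp (contDiff_snd.comp hψ2))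
  rw [← hint.pdR_pdR_position hS hψd, pdR_pdR_comm hq, hint.pdR_pdR_position hS hψd]

/-- if `X` is an integrable SOPDE, then its coefficients are symmetric:
`(X_A)^i_B = (X_B)^i_A` at every point. -/
theorem stmt3 {k n : ℕ} (X : Fin k → Phase k n → Phase k n)
    (hX : ∀ A, ContDiff ℝ (⊤ : ℕ∞) (X A)) (hS : IsSOPDE X)
    (h : ∀ m : Phase k n, ∃ (ψ : (Fin k → ℝ) → Phase k n) (t₀ : Fin k → ℝ),
        ContDiff ℝ (⊤ : ℕ∞) ψ ∧ IsIntegralSection X ψ ∧ ψ t₀ = m) :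
    ∀ (p : Phase k n) (i : Fin n) (A B : Fin k), (X A p).2.2 i B = (X B p).2.2 i A :=
  stmt3_general X hS h
end
end

section
/- Let L : ℝ^k × ℝ^n × ℝ^{nk} → ℝ be a smooth Lagrangian and X = (X_1, …, X_k) a k-vector field with (X_A)^B = δ^B_A whose coefficients satisfy at every point, for each i: Σ_{B,j} ∂²L/∂q^j∂v^i_B · (v^j_B − (X_B)^j) + Σ_B ∂²L/∂t^B∂v^i_B + Σ_{B,j} v^j_B · ∂²L/∂q^j∂v^i_B + Σ_{B,C,l} (X_B)^l_C · ∂²L/∂v^l_C∂v^i_B = ∂L/∂q^i. If φ : ℝ^k → ℝ^n is a smooth map whose first prolongation φ^[1] is an integral section of X, then φ solves the Euler–Lagrange field equations for L. -/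
noncomputable section

/-- Partial derivative `∂f/∂t^A` on phase space. -/
def pdt {k n : ℕ} (A : Fin k) (f : Phase k n → ℝ) (p : Phase k n) : ℝ :=
  fderiv ℝ f p (Pi.single A 1, 0, 0)

/-- Partial derivative `∂f/∂q^i` on phase space. -/
def pdq {k n : ℕ} (i : Fin n) (f : Phase k n → ℝ) (p : Phase k n) : ℝ :=
  fderiv ℝ f p (0, Pi.single i 1, 0)

/-- Partial derivative `∂f/∂v^i_A` on phase space. -/
def pdv {k n : ℕ} (i : Fin n) (A : Fin k) (f : Phase k n → ℝ) (p : Phase k n) : ℝ :=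
  fderiv ℝ f p (0, 0, Pi.single i (Pi.single A 1))

/-- The Hessian of `L` with respect to the velocities, as an `nk × nk` matrix. -/
def hessV {k n : ℕ} (L : Phase k n → ℝ) (p : Phase k n) :
    Matrix (Fin n × Fin k) (Fin n × Fin k) ℝ :=
  Matrix.of fun a b => pdv a.1 a.2 (pdv b.1 b.2 L) p

/-- `L` is a regular Lagrangian: its velocity Hessian is invertible at every point. -/
def Regular {k n : ℕ} (L : Phase k n → ℝ) : Prop :=
  ∀ p, IsUnit (hessV L p)

/-! Along an integral section `φ^[1]` of `X`, the `q`-component of `X_A` is forced to be the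
velocity `∂φ/∂t^A`, which is the `v_A`-coordinate of `φ^[1]`; so the first sum in the hypothesis
vanishes. What remains is, summand by summand in `A`, the chain-rule expansion of
`∂/∂t^A [(∂L/∂v^i_A) ∘ φ^[1]]` in the direction `∂φ^[1]/∂t^A = X_A`. -/

open Finset

theorem ContDiff.differentiable_fderiv_apply {E F : Type*} [NormedAddCommGroup E]
    [NormedSpace ℝ E] [NormedAddCommGroup F] [NormedSpace ℝ F] {f : E → F}
    (hf : ContDiff ℝ 2 f) (w : E) : Differentiable ℝ fun x => fderiv ℝ f x w :=
  ((hf.fderiv_right (m := 1) le_rfl).clm_apply contDiff_const).differentiable one_ne_zero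

section

variable {k n : ℕ}

theorem fderiv_apply_eq_pdt_add_of_fst_eq_single {g : Phase k n → ℝ} {p w : Phase k n}
    {A : Fin k} (hw : w.1 = Pi.single A 1) :
    fderiv ℝ g p w =
      pdt A g p + ∑ j, w.2.1 j * pdq j g p + ∑ l, ∑ C, w.2.2 l C * pdv l C g p := by
  have hdecomp : w = (Pi.single A 1, 0, 0)
      + ∑ j, w.2.1 j • ((0, Pi.single j 1, 0) : Phase k n)
      + ∑ l, ∑ C, w.2.2 l C • ((0, 0, Pi.single l (Pi.single C 1)) : Phase k n) := by
    refine Prod.ext ?_ (Prod.ext ?_ ?_)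
    · simp [Prod.fst_sum, hw]
    · funext m
      simp [Prod.fst_sum, Prod.snd_sum, Finset.sum_apply, Pi.single_apply]
    · funext m B
      simp [Prod.snd_sum, Finset.sum_apply, Pi.single_apply]
  conv_lhs => rw [hdecomp]
  simp only [map_add, map_sum, map_smul, smul_eq_mul]
  rfl

theorem differentiable_prolong {φ : (Fin k → ℝ) → Fin n → ℝ} (hφ : ContDiff ℝ 2 φ) :
    Differentiable ℝ (prolong φ) :=
  differentiable_id.prodMk <| (hφ.differentiable two_ne_zero).prodMk <|
    differentiable_pi.mpr fun i => differentiable_pi.mpr fun _ =>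
      (contDiff_pi.mp hφ i).differentiable_fderiv_apply _

theorem IsIntegralSection.pdR_comp {X : Fin k → Phase k n → Phase k n}
    {ψ : (Fin k → ℝ) → Phase k n} (hint : IsIntegralSection X ψ) {g : Phase k n → ℝ}
    {t : Fin k → ℝ} (hg : DifferentiableAt ℝ g (ψ t)) (hψ : DifferentiableAt ℝ ψ t)
    (A : Fin k) : pdR A (fun s => g (ψ s)) t = fderiv ℝ g (ψ t) (X A (ψ t)) := by
  rw [pdR, fderiv_fun_comp t hg hψ, ContinuousLinearMap.comp_apply, hint t A]

theorem IsIntegralSection.snd_fst_eq_velocity {X : Fin k → Phase k n → Phase k n}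
    {φ : (Fin k → ℝ) → Fin n → ℝ} (hint : IsIntegralSection X (prolong φ)) {t : Fin k → ℝ}
    (hprol : DifferentiableAt ℝ (prolong φ) t) (A : Fin k) (j : Fin n) :
    (X A (prolong φ t)).2.1 j = (prolong φ t).2.2 j A := by
  have hφ : HasFDerivAt φ _ t := hprol.hasFDerivAt.snd.fst
  calc (X A (prolong φ t)).2.1 j = fderiv ℝ φ t (Pi.single A 1) j := by
        rw [← hint t A, hφ.fderiv]; rfl
    _ = pdR A (fun s => φ s j) t := by
        rw [pdR, fderiv_apply hφ.differentiableAt]; rfl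

end

theorem stmt6_general {k n : ℕ} (L : Phase k n → ℝ) (hL : ContDiff ℝ (⊤ : ℕ∞) L)
    (X : Fin k → Phase k n → Phase k n)
    (h1 : ∀ A p, (X A p).1 = Pi.single A 1)
    (h2 : ∀ p (i : Fin n),
        (∑ B, ∑ j, pdq j (pdv i B L) p * (p.2.2 j B - (X B p).2.1 j))
        + (∑ B, pdt B (pdv i B L) p)
        + (∑ B, ∑ j, p.2.2 j B * pdq j (pdv i B L) p)
        + (∑ B, ∑ C, ∑ l, (X B p).2.2 l C * pdv l C (pdv i B L) p)
        = pdq i L p)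
    (φ : (Fin k → ℝ) → Fin n → ℝ) (hφ : ContDiff ℝ (⊤ : ℕ∞) φ)
    (hint : IsIntegralSection X (prolong φ)) :
    ∀ t (i : Fin n),
      ∑ A, pdR A (fun s => pdv i A L (prolong φ s)) t = pdq i L (prolong φ t) := by
  intro t i
  have hprol : DifferentiableAt ℝ (prolong φ) t :=
    differentiable_prolong (hφ.of_le (by norm_cast)) t
  have hvel := hint.snd_fst_eq_velocity hprol
  have hEL := h2 (prolong φ t) i
  simp only [hvel, sub_self, mul_zero, sum_const_zero, zero_add] at hEL
  rw [← hEL, ← sum_add_distrib, ← sum_add_distrib]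
  refine sum_congr rfl fun A _ => ?_
  have hg : DifferentiableAt ℝ (pdv i A L) (prolong φ t) :=
    (hL.of_le (by norm_cast)).differentiable_fderiv_apply _ _
  rw [hint.pdR_comp hg hprol, fderiv_apply_eq_pdt_add_of_fst_eq_single (h1 A _),
    sum_comm (s := univ (α := Fin n))]
  simp only [hvel]

/-- if the `k`-vector field `X` with `(X_A)^B = δ^B_A` satisfies the
Lagrangian component equation (\ref{lagloc22}) everywhere, then any map `φ` whose first
prolongation is an integral section of `X` solves the Euler–Lagrange field equations. -/
theorem stmt6 {k n : ℕ} (L : Phase k n → ℝ) (hL : ContDiff ℝ (⊤ : ℕ∞) L)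
    (X : Fin k → Phase k n → Phase k n) (hX : ∀ A, ContDiff ℝ (⊤ : ℕ∞) (X A))
    (h1 : ∀ A p, (X A p).1 = Pi.single A 1)
    (h2 : ∀ p (i : Fin n),
        (∑ B, ∑ j, pdq j (pdv i B L) p * (p.2.2 j B - (X B p).2.1 j))
        + (∑ B, pdt B (pdv i B L) p)
        + (∑ B, ∑ j, p.2.2 j B * pdq j (pdv i B L) p)
        + (∑ B, ∑ C, ∑ l, (X B p).2.2 l C * pdv l C (pdv i B L) p)
        = pdq i L p)
    (φ : (Fin k → ℝ) → Fin n → ℝ) (hφ : ContDiff ℝ (⊤ : ℕ∞) φ)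
    (hint : IsIntegralSection X (prolong φ)) :
    ∀ t (i : Fin n),
      ∑ A, pdR A (fun s => pdv i A L (prolong φ s)) t = pdq i L (prolong φ t) :=
  stmt6_general L hL X h1 h2 φ hφ hint
end
end

section
/- Let L : ℝ^k × ℝ^n × ℝ^{nk} → ℝ be smooth and regular, let U be an open set on which the Legendre map FL is a diffeomorphism onto the open set FL(U), and let H : FL(U) → ℝ be the smooth function with H ∘ FL = E_L on U. Let ψ_L : V ⊆ ℝ^k → U be a smooth map, ψ_L(t) = (ψ^A(t), ψ^i(t), ψ^i_A(t)), satisfying ψ^A(t) = t^A + c^A for constants c^A, ψ^i_A(t) = ∂ψ^i/∂t^A(t), and Σ_{A=1}^k ∂/∂t^A[(∂L/∂v^i_A)(ψ_L(t))] = (∂L/∂q^i)(ψ_L(t)) for all i, t. Then ψ_H := FL ∘ ψ_L, written ψ_H(t) = (ψ^A(t), ψ^i(t), ψ^A_i(t)) with ψ^A_i(t) = (∂L/∂v^i_A)(ψ_L(t)), solves the Hamilton–De Donder–Weyl field equations for H: ∂H/∂p^A_i(ψ_H(t)) = ∂ψ^i/∂t^A(t) and ∂H/∂q^i(ψ_H(t))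 = −Σ_{A=1}^k ∂ψ^A_i/∂t^A(t) for all i, A, t ∈ V. -/
noncomputable section

/-- The Legendre map `FL(t, q, v) = (t, q, ∂L/∂v^i_A(t, q, v))`. -/
def FL {k n : ℕ} (L : Phase k n → ℝ) (p : Phase k n) : Phase k n :=
  (p.1, p.2.1, fun i A => pdv i A L p)

/-- The energy `E_L = Σ_{A,i} v^i_A ∂L/∂v^i_A − L`. -/
def energy {k n : ℕ} (L : Phase k n → ℝ) (p : Phase k n) : ℝ :=
  (∑ A, ∑ i, p.2.2 i A * pdv i A L p) - L p

/-!
Differentiating `H ∘ FL = E_L` at a point `p = (t, q, v)` of `U` by the chain rule, the terms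
`∂L/∂v · δv` coming from `E_L` cancel and one is left with
`Σ_{i,A} (∂H/∂p^A_i(FL p) − v^i_A) · d(∂L/∂v^i_A)(p) δ = −(∂H/∂(t,q)(FL p) + ∂L/∂(t,q)(p)) δ`.
In a velocity direction `δ` the right side vanishes and the left side is the velocity Hessian
applied to `∂H/∂p − v`, so regularity gives `∂H/∂p^A_i(FL p) = v^i_A`; in the direction of `q^j`
the left side then vanishes, giving `∂H/∂q^j(FL p) = −∂L/∂q^j(p)`. Along `ψ_L` these become the
two field equations via `ψ^i_A = ∂ψ^i/∂t^A` and the Euler–Lagrange equations.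
-/

section Legendre

open Filter Topology

variable {k n : ℕ} {L H : Phase k n → ℝ} {p : Phase k n}

lemma differentiable_pdv (hL : ContDiff ℝ 2 L) (i : Fin n) (A : Fin k) :
    Differentiable ℝ (pdv i A L) :=
  ((hL.fderiv_right (m := 1) (by norm_num)).clm_apply contDiff_const).differentiable
    (by norm_num)

lemma differentiable_FL (hL : ContDiff ℝ 2 L) : Differentiable ℝ (FL L) := by
  have := differentiable_pdv hL
  unfold FL
  fun_prop

lemma fderiv_FL_apply (hL : ContDiff ℝ 2 L) (p δ : Phase k n) :
    fderiv ℝ (FL L) p δ = (δ.1, δ.2.1, fun i A => fderiv ℝ (pdv i A L) p δ) := by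
  have hpi : HasFDerivAt (fun q => fun i A => pdv i A L q)
      (ContinuousLinearMap.pi fun i => ContinuousLinearMap.pi fun A => fderiv ℝ (pdv i A L) p) p :=
    hasFDerivAt_pi.2 fun i => hasFDerivAt_pi.2 fun A =>
      (differentiable_pdv hL i A p).hasFDerivAt
  have h : HasFDerivAt (FL L) _ p := hasFDerivAt_fst.prodMk (hasFDerivAt_snd.fst.prodMk hpi)
  rw [h.fderiv]
  rfl

lemma fderiv_energy_apply (hL : ContDiff ℝ 2 L) (p δ : Phase k n) :
    fderiv ℝ (energy L) p δ =
      ∑ A, ∑ i, (p.2.2 i A * fderiv ℝ (pdv i A L) p δ + pdv i A L p * δ.2.2 i A)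
        - fderiv ℝ L p δ := by
  have hv (i : Fin n) (A : Fin k) :=
    ((ContinuousLinearMap.proj (R := ℝ) (φ := fun _ : Fin k => ℝ) A).comp
      ((ContinuousLinearMap.proj (R := ℝ) (φ := fun _ : Fin n => Fin k → ℝ) i).comp
        ((ContinuousLinearMap.snd ℝ (Fin n → ℝ) _).comp
          (ContinuousLinearMap.snd ℝ (Fin k → ℝ) _)))).hasFDerivAt (x := p)
  have h : HasFDerivAt (energy L) _ p := (HasFDerivAt.fun_sum fun A _ =>
      HasFDerivAt.fun_sum fun i _ => (hv i A).mul (differentiable_pdv hL i A p).hasFDerivAt).sub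
    (hL.differentiable (by norm_num) p).hasFDerivAt
  rw [h.fderiv]
  simp

lemma fderiv_apply_eq_add_sum_pdv (f : Phase k n → ℝ) (x : Phase k n) (a : Fin k → ℝ)
    (b : Fin n → ℝ) (w : Fin n → Fin k → ℝ) :
    fderiv ℝ f x (a, b, w) = fderiv ℝ f x (a, b, 0) + ∑ i, ∑ A, w i A * pdv i A f x := by
  have hw : ((0, 0, w) : Phase k n) = ∑ i, ∑ A, w i A • (0, 0, Pi.single i (Pi.single A 1)) := by
    ext <;> simp [Prod.fst_sum, Prod.snd_sum, Finset.sum_apply, Pi.single_apply, ite_apply]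
  rw [show ((a, b, w) : Phase k n) = (a, b, 0) + (0, 0, w) by simp, map_add, hw]
  simp only [map_sum, map_smul, smul_eq_mul, pdv]

lemma fderiv_apply_FL_eq_fderiv_energy (hL : ContDiff ℝ 2 L) (hH : DifferentiableAt ℝ H (FL L p))
    (hHL : H ∘ FL L =ᶠ[𝓝 p] energy L) (δ : Phase k n) :
    fderiv ℝ H (FL L p) (δ.1, δ.2.1, fun i A => fderiv ℝ (pdv i A L) p δ) =
      fderiv ℝ (energy L) p δ := by
  rw [← fderiv_FL_apply hL, ← hHL.fderiv_eq, fderiv_comp p hH (differentiable_FL hL p)]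
  rfl

lemma sum_fderiv_pdv_mul_pdv_sub (hL : ContDiff ℝ 2 L) (hH : DifferentiableAt ℝ H (FL L p))
    (hHL : H ∘ FL L =ᶠ[𝓝 p] energy L) (δ : Phase k n) :
    ∑ i, ∑ A, fderiv ℝ (pdv i A L) p δ * (pdv i A H (FL L p) - p.2.2 i A) =
      -(fderiv ℝ H (FL L p) (δ.1, δ.2.1, 0) + fderiv ℝ L p (δ.1, δ.2.1, 0)) := by
  have h := fderiv_apply_FL_eq_fderiv_energy hL hH hHL δ
  have hLδ : fderiv ℝ L p δ = _ := fderiv_apply_eq_add_sum_pdv L p δ.1 δ.2.1 δ.2.2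
  rw [fderiv_energy_apply hL, fderiv_apply_eq_add_sum_pdv, hLδ] at h
  simp only [Finset.sum_comm (s := (Finset.univ : Finset (Fin k))), Finset.sum_add_distrib,
    mul_sub, Finset.sum_sub_distrib] at h ⊢
  simp only [mul_comm] at h ⊢
  linarith

lemma pdv_apply_FL_eq_velocity (hL : ContDiff ℝ 2 L) (hreg : IsUnit (hessV L p))
    (hH : DifferentiableAt ℝ H (FL L p)) (hHL : H ∘ FL L =ᶠ[𝓝 p] energy L)
    (i : Fin n) (A : Fin k) : pdv i A H (FL L p) = p.2.2 i A := by
  set x : Fin n × Fin k → ℝ := fun a => pdv a.1 a.2 H (FL L p) - p.2.2 a.1 a.2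
  have hx : (hessV L p).mulVec x = 0 := by
    ext ⟨j, B⟩
    have h := sum_fderiv_pdv_mul_pdv_sub hL hH hHL (0, 0, Pi.single j (Pi.single B 1))
    simp only [Prod.mk_zero_zero, map_zero, add_zero, neg_zero] at h
    simp only [Pi.zero_apply, Matrix.mulVec, dotProduct, Fintype.sum_prod_type]
    -- `hessV L p (j, B) (i, A)` unfolds to the factor `fderiv ℝ (pdv i A L) p _` of `h`
    exact h
  have hx0 := Matrix.mulVec_injective_iff_isUnit.2 hreg (hx.trans (Matrix.mulVec_zero _).symm)
  exact sub_eq_zero.1 (congrFun hx0 (i, A))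

lemma pdq_apply_FL_eq_neg_pdq (hL : ContDiff ℝ 2 L) (hreg : IsUnit (hessV L p))
    (hH : DifferentiableAt ℝ H (FL L p)) (hHL : H ∘ FL L =ᶠ[𝓝 p] energy L) (i : Fin n) :
    pdq i H (FL L p) = -pdq i L p := by
  have h := sum_fderiv_pdv_mul_pdv_sub hL hH hHL (0, Pi.single i 1, 0)
  simp only [pdv_apply_FL_eq_velocity hL hreg hH hHL, sub_self, mul_zero,
    Finset.sum_const_zero] at h
  rw [pdq, pdq]
  linarith

end Legendre

theorem stmt10_general {k n : ℕ} (L : Phase k n → ℝ) (hL : ContDiff ℝ (⊤ : ℕ∞) L)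
    (hreg : Regular L)
    (U : Set (Phase k n)) (hU : IsOpen U) (hFLU : IsOpen (FL L '' U))
    (H : Phase k n → ℝ) (hH : ContDiffOn ℝ (⊤ : ℕ∞) H (FL L '' U))
    (hHL : ∀ p ∈ U, H (FL L p) = energy L p)
    (V : Set (Fin k → ℝ))
    (ψL : (Fin k → ℝ) → Phase k n)
    (hψU : ∀ t ∈ V, ψL t ∈ U)
    (hvel : ∀ t ∈ V, ∀ (i : Fin n) (A : Fin k),
      (ψL t).2.2 i A = pdR A (fun s => (ψL s).2.1 i) t)
    (hEL : ∀ t ∈ V, ∀ i : Fin n,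
      ∑ A, pdR A (fun s => pdv i A L (ψL s)) t = pdq i L (ψL t)) :
    ∀ t ∈ V, (∀ (i : Fin n) (A : Fin k),
        pdv i A H (FL L (ψL t)) = pdR A (fun s => (ψL s).2.1 i) t) ∧
      (∀ i : Fin n,
        pdq i H (FL L (ψL t)) = - ∑ A, pdR A (fun s => pdv i A L (ψL s)) t) := by
  intro t ht
  have hp := hψU t ht
  have hL2 : ContDiff ℝ 2 L := hL.of_le (WithTop.coe_le_coe.2 le_top)
  have hHd : DifferentiableAt ℝ H (FL L (ψL t)) :=
    (hH.contDiffAt (hFLU.mem_nhds (Set.mem_image_of_mem _ hp))).differentiableAt (by simp)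
  have hHL' : H ∘ FL L =ᶠ[nhds (ψL t)] energy L := Filter.eventually_of_mem (hU.mem_nhds hp) hHL
  refine ⟨fun i A => ?_, fun i => ?_⟩
  · rw [pdv_apply_FL_eq_velocity hL2 (hreg _) hHd hHL', hvel t ht]
  · rw [pdq_apply_FL_eq_neg_pdq hL2 (hreg _) hHd hHL', hEL t ht]

/-- under the setup of Statement 9, if `ψ_L : V → U` satisfies
`ψ^A(t) = t^A + c^A`, `ψ^i_A = ∂ψ^i/∂t^A` and the Euler–Lagrange equations, then
`ψ_H = FL ∘ ψ_L` solves the Hamilton–De Donder–Weyl field equations for `H`. -/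
theorem stmt10 {k n : ℕ} (L : Phase k n → ℝ) (hL : ContDiff ℝ (⊤ : ℕ∞) L)
    (hreg : Regular L)
    (U : Set (Phase k n)) (hU : IsOpen U) (hFLU : IsOpen (FL L '' U))
    (G : Phase k n → Phase k n) (hG : ContDiffOn ℝ (⊤ : ℕ∞) G (FL L '' U))
    (hGl : ∀ p ∈ U, G (FL L p) = p) (hGr : ∀ q ∈ FL L '' U, FL L (G q) = q)
    (H : Phase k n → ℝ) (hH : ContDiffOn ℝ (⊤ : ℕ∞) H (FL L '' U))
    (hHL : ∀ p ∈ U, H (FL L p) = energy L p)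
    (V : Set (Fin k → ℝ)) (hV : IsOpen V)
    (ψL : (Fin k → ℝ) → Phase k n) (hψL : ContDiffOn ℝ (⊤ : ℕ∞) ψL V)
    (hψU : ∀ t ∈ V, ψL t ∈ U)
    (c : Fin k → ℝ) (hc : ∀ t ∈ V, ∀ A, (ψL t).1 A = t A + c A)
    (hvel : ∀ t ∈ V, ∀ (i : Fin n) (A : Fin k),
      (ψL t).2.2 i A = pdR A (fun s => (ψL s).2.1 i) t)
    (hEL : ∀ t ∈ V, ∀ i : Fin n,
      ∑ A, pdR A (fun s => pdv i A L (ψL s)) t = pdq i L (ψL t)) :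
    ∀ t ∈ V, (∀ (i : Fin n) (A : Fin k),
        pdv i A H (FL L (ψL t)) = pdR A (fun s => (ψL s).2.1 i) t) ∧
      (∀ i : Fin n,
        pdq i H (FL L (ψL t)) = - ∑ A, pdR A (fun s => pdv i A L (ψL s)) t) :=
  stmt10_general L hL hreg U hU hFLU H hH hHL V ψL hψU hvel hEL
end
end

section
/- Let L : ℝ^k × ℝ^n × ℝ^{nk} → ℝ be smooth and let Z_A = δ^B_A ∂/∂t^B + v^i_A ∂/∂q^i + (Z_A)^i_B ∂/∂v^i_B + (Z_A)^B_i ∂/∂p^B_i be a vector field on the unified space M with smooth coefficients (Z_A)^i_B, (Z_A)^B_i. Then Z_A is tangent to M_L, i.e. the derivative along Z_A of each constraint function (t, q, v, p) ↦ p^B_j − ∂L/∂v^j_B(t, q, v) vanishes at every point of M_L, if and only if at every point of M_L: (Z_A)^B_j = ∂²L/∂t^A∂v^j_B + Σ_i v^i_A · ∂²L/∂q^i∂v^j_B + Σ_{i,C} (Z_A)^i_C · ∂²L/∂v^i_C∂v^j_B. -/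
noncomputable section

/-- The unified (Skinner–Rusk) space `M = ℝ^k × ℝ^n × ℝ^{nk} × ℝ^{nk}` with
coordinates `(t^A, q^i, v^i_A, p^A_i)`. -/
abbrev USpace (k n : ℕ) : Type :=
  (Fin k → ℝ) × (Fin n → ℝ) × (Fin n → Fin k → ℝ) × (Fin n → Fin k → ℝ)

/-- Projection of the unified space onto the Lagrangian phase space. -/
def lagPr {k n : ℕ} (m : USpace k n) : Phase k n := (m.1, m.2.1, m.2.2.1)

/-- The graph `M_L` of the Legendre map: `p^A_i = ∂L/∂v^i_A(t, q, v)`. -/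
def MSet {k n : ℕ} (L : Phase k n → ℝ) : Set (USpace k n) :=
  {m | ∀ (i : Fin n) (A : Fin k), m.2.2.2 i A = pdv i A L (lagPr m)}

/-- Auxiliary: decomposition of a tangent vector on phase space. -/
lemma phase_decomp {k n : ℕ} (w : Phase k n) :
    w = (∑ B, w.1 B • ((Pi.single B 1, 0, 0) : Phase k n))
      + (∑ i, w.2.1 i • ((0, Pi.single i 1, 0) : Phase k n))
      + (∑ i, ∑ C, w.2.2 i C • ((0, 0, Pi.single i (Pi.single C 1)) : Phase k n)) := by
  refine Prod.ext ?_ (Prod.ext ?_ ?_) <;>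
    simp [Prod.fst_sum, Prod.snd_sum] <;>
    funext a <;>
    simp [Finset.sum_apply, Pi.single_apply] <;>
    funext b <;>
    simp [Finset.sum_apply, Pi.single_apply]

/-- Auxiliary: expansion of a directional derivative in coordinates. -/
lemma fderiv_expand {k n : ℕ} (f : Phase k n → ℝ) (x : Phase k n) (w : Phase k n) :
    fderiv ℝ f x w
      = ∑ B, w.1 B * pdt B f x + ∑ i, w.2.1 i * pdq i f x
        + ∑ i, ∑ C, w.2.2 i C * pdv i C f x := by
  conv_lhs => rw [phase_decomp w]
  simp only [map_add, map_sum, map_smul, smul_eq_mul, pdt, pdq, pdv]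

/-- Auxiliary: smoothness of the fibre derivative. -/
lemma contDiff_pdv {k n : ℕ} (f : Phase k n → ℝ) (hf : ContDiff ℝ (⊤ : ℕ∞) f)
    (i : Fin n) (A : Fin k) : ContDiff ℝ (⊤ : ℕ∞) (pdv i A f) := by
  have h1 : ContDiff ℝ (⊤ : ℕ∞) (fderiv ℝ f) :=
    hf.fderiv_right (m := (⊤ : ℕ∞)) (by exact_mod_cast le_top)
  exact (ContinuousLinearMap.apply ℝ ℝ
    ((0, 0, Pi.single i (Pi.single A 1)) : Phase k n)).contDiff.comp h1

/-- Auxiliary: the projection `lagPr` as a continuous linear map. -/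
def lagPrL (k n : ℕ) : USpace k n →L[ℝ] Phase k n :=
  (ContinuousLinearMap.fst ℝ _ _).prod
    (((ContinuousLinearMap.fst ℝ _ _).comp (ContinuousLinearMap.snd ℝ _ _)).prod
      (((ContinuousLinearMap.fst ℝ _ _).comp (ContinuousLinearMap.snd ℝ _ _)).comp
        (ContinuousLinearMap.snd ℝ _ _)))

/-- Auxiliary: the coordinate `p^B_j` as a continuous linear map. -/
def coordP {k n : ℕ} (j : Fin n) (B : Fin k) : USpace k n →L[ℝ] ℝ :=
  (ContinuousLinearMap.proj (R := ℝ) (φ := fun _ : Fin k => ℝ) B).comp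
    ((ContinuousLinearMap.proj (R := ℝ) (φ := fun _ : Fin n => Fin k → ℝ) j).comp
      ((ContinuousLinearMap.snd ℝ (Fin n → Fin k → ℝ) (Fin n → Fin k → ℝ)).comp
        ((ContinuousLinearMap.snd ℝ (Fin n → ℝ) ((Fin n → Fin k → ℝ) × (Fin n → Fin k → ℝ))).comp
          (ContinuousLinearMap.snd ℝ (Fin k → ℝ)
            ((Fin n → ℝ) × (Fin n → Fin k → ℝ) × (Fin n → Fin k → ℝ))))))

/-- Auxiliary: the key computation of the derivative of the constraint along `Z`. -/
lemma key_comp {k n : ℕ} (L : Phase k n → ℝ) (hL : ContDiff ℝ (⊤ : ℕ∞) L)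
    (A : Fin k) (Z : USpace k n → USpace k n)
    (hZt : ∀ m, (Z m).1 = Pi.single A 1)
    (hZq : ∀ m (i : Fin n), (Z m).2.1 i = m.2.2.1 i A)
    (m : USpace k n) (j : Fin n) (B : Fin k) :
    fderiv ℝ (fun m' : USpace k n => m'.2.2.2 j B - pdv j B L (lagPr m')) m (Z m)
      = (Z m).2.2.2 j B
        - (pdt A (pdv j B L) (lagPr m)
            + ∑ i, (lagPr m).2.2 i A * pdq i (pdv j B L) (lagPr m)
            + ∑ C, ∑ i, (Z m).2.2.1 i C * pdv i C (pdv j B L) (lagPr m)) := by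
  have hg : ContDiff ℝ (⊤ : ℕ∞) (pdv j B L) := contDiff_pdv L hL j B
  have h1 : (fun m' : USpace k n => m'.2.2.2 j B - pdv j B L (lagPr m'))
      = fun m' => coordP j B m' - (pdv j B L) (lagPrL k n m') := rfl
  have hd1 : DifferentiableAt ℝ (fun m' : USpace k n => coordP j B m') m :=
    (coordP j B).differentiableAt
  have hd2 : DifferentiableAt ℝ (fun m' : USpace k n => pdv j B L (lagPrL k n m')) m :=
    ((hg.differentiable (by simp)) (lagPrL k n m)).comp m (lagPrL k n).differentiableAt
  have hc : fderiv ℝ (fun m' : USpace k n => pdv j B L (lagPrL k n m')) m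
      = (fderiv ℝ (pdv j B L) (lagPrL k n m)).comp (lagPrL k n) := by
    rw [show (fun m' : USpace k n => pdv j B L (lagPrL k n m'))
        = (pdv j B L) ∘ (lagPrL k n) from rfl]
    rw [fderiv_comp (x := m) ((hg.differentiable (by simp)) (lagPrL k n m))
      (lagPrL k n).differentiableAt, (lagPrL k n).fderiv]
  rw [h1, fderiv_fun_sub hd1 hd2, ContinuousLinearMap.sub_apply, (coordP j B).fderiv, hc]
  have hval : (lagPrL k n) (Z m) = (((Z m).1, (Z m).2.1, (Z m).2.2.1) : Phase k n) := rfl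
  have := fderiv_expand (pdv j B L) (lagPr m) (((Z m).1, (Z m).2.1, (Z m).2.2.1) : Phase k n)
  simp only [ContinuousLinearMap.comp_apply, hval]
  have hlag : lagPrL k n m = lagPr m := rfl
  have h2 : coordP j B (Z m) = (Z m).2.2.2 j B := rfl
  have ht : ∑ B', (Z m).1 B' * pdt B' (pdv j B L) (lagPr m)
      = pdt A (pdv j B L) (lagPr m) := by
    rw [hZt]
    simp [Pi.single_apply, ite_mul]
  have hq : ∑ i, (Z m).2.1 i * pdq i (pdv j B L) (lagPr m)
      = ∑ i, (lagPr m).2.2 i A * pdq i (pdv j B L) (lagPr m) := by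
    refine Finset.sum_congr rfl fun i _ => ?_
    rw [hZq m i]
    rfl
  rw [hlag, this, h2]
  dsimp only
  rw [ht, hq, Finset.sum_comm]

/-- a vector field `Z_A` on the unified space with components
`(Z_A)^B = δ^B_A`, `(Z_A)^i = v^i_A` and arbitrary smooth remaining coefficients is
tangent to `M_L` (the derivative along `Z_A` of each constraint
`p^B_j − ∂L/∂v^j_B` vanishes on `M_L`) iff on `M_L`
`(Z_A)^B_j = ∂²L/∂t^A∂v^j_B + Σ_i v^i_A ∂²L/∂q^i∂v^j_B + Σ_{i,C} (Z_A)^i_C ∂²L/∂v^i_C∂v^j_B`. -/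
theorem stmt14 {k n : ℕ} (L : Phase k n → ℝ) (hL : ContDiff ℝ (⊤ : ℕ∞) L)
    (A : Fin k) (Z : USpace k n → USpace k n) (hZ : ContDiff ℝ (⊤ : ℕ∞) Z)
    (hZt : ∀ m, (Z m).1 = Pi.single A 1)
    (hZq : ∀ m (i : Fin n), (Z m).2.1 i = m.2.2.1 i A) :
    (∀ m ∈ MSet L, ∀ (j : Fin n) (B : Fin k),
        fderiv ℝ (fun m' : USpace k n => m'.2.2.2 j B - pdv j B L (lagPr m')) m (Z m) = 0)
      ↔ (∀ m ∈ MSet L, ∀ (j : Fin n) (B : Fin k),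
          (Z m).2.2.2 j B
            = pdt A (pdv j B L) (lagPr m)
              + ∑ i, (lagPr m).2.2 i A * pdq i (pdv j B L) (lagPr m)
              + ∑ C, ∑ i, (Z m).2.2.1 i C * pdv i C (pdv j B L) (lagPr m)) := by
  constructor
  · intro h m hm j B
    have := h m hm j B
    rw [key_comp L hL A Z hZt hZq m j B, sub_eq_zero] at this
    exact this
  · intro h m hm j B
    rw [key_comp L hL A Z hZt hZq m j B, sub_eq_zero]
    exact h m hm j B
end
end
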